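/- For $\gamma = \begin{pmatrix} a & b \\ c & d \end{pmatrix} \in SL_2(\mathbb{R})$, define $\mathrm{sgn}(\gamma) = \mathrm{sgn}(c)$ if $c \neq 0$ and $\mathrm{sgn}(\gamma) = \mathrm{sgn}(a)$ if $c = 0$ (Asai's sign). Define $W : SL_2(\mathbb{R}) \times SL_2(\mathbb{R}) \to \{-1,0,1\}$ by $W(\gamma_1, \gamma_2) = 1$ if $\mathrm{sgn}(\gamma_1) = \mathrm{sgn}(\gamma_2) = 1$ and $\mathrm{sgn}(\gamma_1\gamma_2) = -1$; $W(\gamma_1, \gamma_2) = -1$ if $\mathrm{sgn}(\gamma_1) = \mathrm{sgn}(\gamma_2) = -1$ and $\mathrm{sgn}(\gamma_1\gamma_2) = 1$; and $W(\gamma_1, \gamma_2) = 0$ otherwise. Then $W$ satisfies the 2-cocycle condition: $W(\gamma_1\gamma_2, \gamma_3) + W(\gamma_1, \gamma_2) = W(\gamma_1, \gamma_2\gamma_3) + W(\gamma_2, \gamma_3)$ for all $\gamma_1, \gamma_2, \gamma_3 \in SL_2(\mathbb{R})$. -/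
import Mathlib


open scoped Classical

/-- Asai's sign function on `SL₂(ℝ)`: the sign of the lower-left entry if nonzero,
otherwise the sign of the upper-left (equivalently diagonal) entry. -/
noncomputable def asaiSgn (γ : Matrix.SpecialLinearGroup (Fin 2) ℝ) : ℝ :=
  if (γ : Matrix (Fin 2) (Fin 2) ℝ) 1 0 ≠ 0 then
    Real.sign ((γ : Matrix (Fin 2) (Fin 2) ℝ) 1 0)
  else
    Real.sign ((γ : Matrix (Fin 2) (Fin 2) ℝ) 0 0)

/-- The 2-cocycle `W` defined from Asai's sign table. -/
noncomputable def asaiW (γ₁ γ₂ : Matrix.SpecialLinearGroup (Fin 2) ℝ) : ℤ :=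
  if asaiSgn γ₁ = 1 ∧ asaiSgn γ₂ = 1 ∧ asaiSgn (γ₁ * γ₂) = -1 then 1
  else if asaiSgn γ₁ = -1 ∧ asaiSgn γ₂ = -1 ∧ asaiSgn (γ₁ * γ₂) = 1 then -1
  else 0

namespace AsaiAux

open Real Complex

abbrev SL2 := Matrix.SpecialLinearGroup (Fin 2) ℝ

/-- The automorphy factor `c z + d`. -/
noncomputable def dnm (γ : SL2) (z : ℂ) : ℂ :=
  ((γ : Matrix (Fin 2) (Fin 2) ℝ) 1 0 : ℂ) * z + ((γ : Matrix (Fin 2) (Fin 2) ℝ) 1 1 : ℂ)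

/-- Möbius action. -/
noncomputable def act (γ : SL2) (z : ℂ) : ℂ :=
  (((γ : Matrix (Fin 2) (Fin 2) ℝ) 0 0 : ℂ) * z + ((γ : Matrix (Fin 2) (Fin 2) ℝ) 0 1 : ℂ)) /
    dnm γ z

lemma det_eq (γ : SL2) :
    (γ : Matrix (Fin 2) (Fin 2) ℝ) 0 0 * (γ : Matrix (Fin 2) (Fin 2) ℝ) 1 1 -
      (γ : Matrix (Fin 2) (Fin 2) ℝ) 0 1 * (γ : Matrix (Fin 2) (Fin 2) ℝ) 1 0 = 1 := by
  have h := γ.prop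
  rwa [Matrix.det_fin_two] at h

lemma dnm_im (γ : SL2) (z : ℂ) :
    (dnm γ z).im = (γ : Matrix (Fin 2) (Fin 2) ℝ) 1 0 * z.im := by
  simp [dnm]

lemma dnm_ne_zero (γ : SL2) {z : ℂ} (hz : 0 < z.im) : dnm γ z ≠ 0 := by
  intro h
  have him : (γ : Matrix (Fin 2) (Fin 2) ℝ) 1 0 * z.im = 0 := by
    rw [← dnm_im γ z, h]; simp
  have hc : (γ : Matrix (Fin 2) (Fin 2) ℝ) 1 0 = 0 := by
    rcases mul_eq_zero.mp him with h' | h'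
    · exact h'
    · exact absurd h' hz.ne'
  have hd : (γ : Matrix (Fin 2) (Fin 2) ℝ) 1 1 = 0 := by
    have hre := congrArg Complex.re h
    simpa [dnm, hc] using hre
  have := det_eq γ
  rw [hc, hd] at this
  norm_num at this

lemma act_im (γ : SL2) (z : ℂ) :
    (act γ z).im = z.im / Complex.normSq (dnm γ z) := by
  by_cases hD : dnm γ z = 0
  · simp [act, hD]
  · have hns : Complex.normSq (dnm γ z) ≠ 0 := (Complex.normSq_pos.mpr hD).ne'
    rw [act, Complex.div_im, div_sub_div_same, div_eq_div_iff hns hns]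
    simp only [dnm, Complex.add_im, Complex.add_re, Complex.mul_im, Complex.mul_re,
      Complex.ofReal_re, Complex.ofReal_im]
    linear_combination z.im * Complex.normSq (((γ : Matrix (Fin 2) (Fin 2) ℝ) 1 0 : ℂ) * z + ((γ : Matrix (Fin 2) (Fin 2) ℝ) 1 1 : ℂ)) * det_eq γ

lemma act_im_pos (γ : SL2) {z : ℂ} (hz : 0 < z.im) : 0 < (act γ z).im := by
  rw [act_im]
  exact div_pos hz (Complex.normSq_pos.mpr (dnm_ne_zero γ hz))

lemma dnm_cocycle (γ₁ γ₂ : SL2) {z : ℂ} (hz : 0 < z.im) :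
    dnm (γ₁ * γ₂) z = dnm γ₁ (act γ₂ z) * dnm γ₂ z := by
  have h2 : dnm γ₂ z ≠ 0 := dnm_ne_zero γ₂ hz
  rw [dnm] at h2
  simp only [dnm, act, Matrix.SpecialLinearGroup.coe_mul, Matrix.mul_apply, Fin.sum_univ_succ,
    Finset.univ_unique, Fin.default_eq_zero, Finset.sum_singleton, Fin.succ_zero_eq_one,
    Fin.isValue, Finset.sum_const, Complex.ofReal_add, Complex.ofReal_mul]
  field_simp
  ring

lemma act_mul (γ₁ γ₂ : SL2) {z : ℂ} (hz : 0 < z.im) :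
    act (γ₁ * γ₂) z = act γ₁ (act γ₂ z) := by
  have h2 : dnm γ₂ z ≠ 0 := dnm_ne_zero γ₂ hz
  have h12 : dnm (γ₁ * γ₂) z ≠ 0 := dnm_ne_zero _ hz
  have h1 : dnm γ₁ (act γ₂ z) ≠ 0 := dnm_ne_zero γ₁ (act_im_pos γ₂ hz)
  rw [dnm_cocycle γ₁ γ₂ hz] at h12
  simp only [act, dnm, Matrix.SpecialLinearGroup.coe_mul, Matrix.mul_apply, Fin.sum_univ_succ,
    Finset.univ_unique, Fin.default_eq_zero, Finset.sum_singleton, Fin.succ_zero_eq_one,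
    Fin.isValue, Finset.sum_const, Complex.ofReal_add, Complex.ofReal_mul] at *
  field_simp at *
  ring

/-- Adjusted argument of the automorphy factor, in `[-π, π)`. -/
noncomputable def aArg (γ : SL2) (z : ℂ) : ℝ :=
  if (dnm γ z).arg = π then -π else (dnm γ z).arg

lemma aArg_lt_pi (γ : SL2) (z : ℂ) : aArg γ z < π := by
  rw [aArg]
  split_ifs with h
  · linarith [Real.pi_pos]
  · exact lt_of_le_of_ne (Complex.arg_le_pi _) h

lemma neg_pi_le_aArg (γ : SL2) (z : ℂ) : -π ≤ aArg γ z := by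
  rw [aArg]
  split_ifs with h
  · exact le_refl _
  · exact (Complex.neg_pi_lt_arg _).le

lemma aArg_mod (γ : SL2) (z : ℂ) : ∃ k : ℤ, aArg γ z = (dnm γ z).arg + 2 * π * k := by
  rw [aArg]
  split_ifs with h
  · exact ⟨-1, by rw [h]; push_cast; ring⟩
  · exact ⟨0, by push_cast; ring⟩

lemma sgn_one_iff (γ : SL2) {z : ℂ} (hz : 0 < z.im) : asaiSgn γ = 1 ↔ 0 ≤ aArg γ z := by
  rcases lt_trichotomy ((γ : Matrix (Fin 2) (Fin 2) ℝ) 1 0) 0 with hc | hc | hc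
  · -- c < 0
    have him : (dnm γ z).im < 0 := by rw [dnm_im]; exact mul_neg_of_neg_of_pos hc hz
    have harg : (dnm γ z).arg < 0 := by
      by_contra h
      exact absurd (Complex.arg_nonneg_iff.mp (not_lt.mp h)) him.not_ge
    have hne : (dnm γ z).arg ≠ π := by
      intro h; exact absurd (Complex.arg_eq_pi_iff.mp h).2 him.ne
    rw [aArg, if_neg hne]
    constructor
    · intro h
      rw [asaiSgn, if_pos hc.ne, Real.sign_of_neg hc] at h
      norm_num at h
    · intro h; exact absurd h harg.not_ge
  · -- c = 0
    have hd : (γ : Matrix (Fin 2) (Fin 2) ℝ) 0 0 * (γ : Matrix (Fin 2) (Fin 2) ℝ) 1 1 = 1 := by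
      have := det_eq γ; rw [hc] at this; linarith
    have hdnm : dnm γ z = ((γ : Matrix (Fin 2) (Fin 2) ℝ) 1 1 : ℂ) := by
      simp [dnm, hc]
    have hs : asaiSgn γ = Real.sign ((γ : Matrix (Fin 2) (Fin 2) ℝ) 0 0) := by
      rw [asaiSgn, if_neg]; simpa using hc
    rcases lt_trichotomy ((γ : Matrix (Fin 2) (Fin 2) ℝ) 1 1) 0 with hd' | hd' | hd'
    · have ha : (γ : Matrix (Fin 2) (Fin 2) ℝ) 0 0 < 0 := by nlinarith
      have harg : (dnm γ z).arg = π := by rw [hdnm]; exact Complex.arg_ofReal_of_neg hd'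
      rw [aArg, if_pos harg, hs, Real.sign_of_neg ha]
      constructor
      · intro h; norm_num at h
      · intro h; linarith [Real.pi_pos]
    · exfalso; rw [hd'] at hd; norm_num at hd
    · have ha : 0 < (γ : Matrix (Fin 2) (Fin 2) ℝ) 0 0 := by nlinarith
      have harg : (dnm γ z).arg = 0 := by rw [hdnm]; exact Complex.arg_ofReal_of_nonneg hd'.le
      have hne : (dnm γ z).arg ≠ π := by rw [harg]; exact fun h => Real.pi_ne_zero h.symm
      rw [aArg, if_neg hne, harg, hs, Real.sign_of_pos ha]
      simp
  · -- c > 0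
    have him : 0 < (dnm γ z).im := by rw [dnm_im]; exact mul_pos hc hz
    have harg : 0 ≤ (dnm γ z).arg := Complex.arg_nonneg_iff.mpr him.le
    have hne : (dnm γ z).arg ≠ π := by
      intro h; exact absurd (Complex.arg_eq_pi_iff.mp h).2 him.ne'
    rw [aArg, if_neg hne]
    constructor
    · intro _; exact harg
    · intro _; rw [asaiSgn, if_pos hc.ne', Real.sign_of_pos hc]

lemma sgn_cases (γ : SL2) : asaiSgn γ = 1 ∨ asaiSgn γ = -1 := by
  rw [asaiSgn]
  split_ifs with h
  · rcases lt_trichotomy ((γ : Matrix (Fin 2) (Fin 2) ℝ) 1 0) 0 with hc | hc | hc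
    · right; exact Real.sign_of_neg hc
    · exact absurd hc h
    · left; exact Real.sign_of_pos hc
  · push_neg at h
    have hd : (γ : Matrix (Fin 2) (Fin 2) ℝ) 0 0 * (γ : Matrix (Fin 2) (Fin 2) ℝ) 1 1 = 1 := by
      have := det_eq γ; rw [h] at this; linarith
    rcases lt_trichotomy ((γ : Matrix (Fin 2) (Fin 2) ℝ) 0 0) 0 with ha | ha | ha
    · right; exact Real.sign_of_neg ha
    · exfalso; rw [ha] at hd; norm_num at hd
    · left; exact Real.sign_of_pos ha

lemma sgn_neg_one_iff (γ : SL2) {z : ℂ} (hz : 0 < z.im) :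
    asaiSgn γ = -1 ↔ aArg γ z < 0 := by
  rcases sgn_cases γ with h | h
  · rw [h]
    constructor
    · intro h'; norm_num at h'
    · intro h'; exact absurd ((sgn_one_iff γ hz).mp h) h'.not_ge
  · rw [h]
    constructor
    · intro _
      by_contra h'
      have := (sgn_one_iff γ hz).mpr (not_lt.mp h')
      rw [h] at this; norm_num at this
    · intro _; rfl

lemma aArg_sub (γ₁ γ₂ : SL2) {z : ℂ} (hz : 0 < z.im) :
    ∃ n : ℤ, aArg γ₁ (act γ₂ z) + aArg γ₂ z - aArg (γ₁ * γ₂) z = 2 * π * n := by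
  obtain ⟨k₁, hk₁⟩ := aArg_mod γ₁ (act γ₂ z)
  obtain ⟨k₂, hk₂⟩ := aArg_mod γ₂ z
  obtain ⟨k₁₂, hk₁₂⟩ := aArg_mod (γ₁ * γ₂) z
  have h1 : dnm γ₁ (act γ₂ z) ≠ 0 := dnm_ne_zero γ₁ (act_im_pos γ₂ hz)
  have h2 : dnm γ₂ z ≠ 0 := dnm_ne_zero γ₂ hz
  have hmul : ((dnm (γ₁ * γ₂) z).arg : Real.Angle) =
      (((dnm γ₁ (act γ₂ z)).arg + (dnm γ₂ z).arg : ℝ) : Real.Angle) := by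
    rw [dnm_cocycle γ₁ γ₂ hz, Complex.arg_mul_coe_angle h1 h2, Real.Angle.coe_add]
  obtain ⟨k, hk⟩ := Real.Angle.angle_eq_iff_two_pi_dvd_sub.mp hmul
  refine ⟨k₁ + k₂ - k₁₂ - k, ?_⟩
  rw [hk₁, hk₂, hk₁₂]
  push_cast
  linear_combination -hk

lemma int_pin_zero {n : ℤ} {x : ℝ} (h : x = 2 * π * n) (h1 : -(2 * π) < x) (h2 : x < 2 * π) :
    x = 0 := by
  have hπ := Real.pi_pos
  have hlo : (-1 : ℝ) < (n : ℝ) := by nlinarith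
  have hhi : (n : ℝ) < 1 := by nlinarith
  have hlo' : (-1 : ℤ) < n := by exact_mod_cast hlo
  have hhi' : n < 1 := by exact_mod_cast hhi
  have hn : n = 0 := by omega
  rw [hn] at h; simpa using h

lemma int_pin_pos {n : ℤ} {x : ℝ} (h : x = 2 * π * n) (h1 : 0 < x) (h2 : x < 3 * π) :
    x = 2 * π := by
  have hπ := Real.pi_pos
  have hlo : (0 : ℝ) < (n : ℝ) := by nlinarith
  have hhi : (n : ℝ) < 2 := by nlinarith
  have hlo' : (0 : ℤ) < n := by exact_mod_cast hlo
  have hhi' : n < 2 := by exact_mod_cast hhi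
  have hn : n = 1 := by omega
  rw [hn] at h; simpa using h

lemma int_pin_neg {n : ℤ} {x : ℝ} (h : x = 2 * π * n) (h1 : -(3 * π) < x) (h2 : x < 0) :
    x = -(2 * π) := by
  have hπ := Real.pi_pos
  have hlo : (-2 : ℝ) < (n : ℝ) := by nlinarith
  have hhi : (n : ℝ) < 0 := by nlinarith
  have hlo' : (-2 : ℤ) < n := by exact_mod_cast hlo
  have hhi' : n < 0 := by exact_mod_cast hhi
  have hn : n = -1 := by omega
  rw [hn] at h; push_cast at h; linarith

theorem asaiW_eq (γ₁ γ₂ : SL2) {z : ℂ} (hz : 0 < z.im) :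
    (asaiW γ₁ γ₂ : ℝ) * (2 * π) = aArg γ₁ (act γ₂ z) + aArg γ₂ z - aArg (γ₁ * γ₂) z := by
  obtain ⟨n, hn⟩ := aArg_sub γ₁ γ₂ hz
  have hw : 0 < (act γ₂ z).im := act_im_pos γ₂ hz
  have hπ := Real.pi_pos
  have b1l := neg_pi_le_aArg γ₁ (act γ₂ z)
  have b1u := aArg_lt_pi γ₁ (act γ₂ z)
  have b2l := neg_pi_le_aArg γ₂ z
  have b2u := aArg_lt_pi γ₂ z
  have b3l := neg_pi_le_aArg (γ₁ * γ₂) z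
  have b3u := aArg_lt_pi (γ₁ * γ₂) z
  rcases sgn_cases γ₁ with h1 | h1 <;> rcases sgn_cases γ₂ with h2 | h2 <;>
    rcases sgn_cases (γ₁ * γ₂) with h12 | h12
  · -- (1,1,1) : n = 0
    have a3 := (sgn_one_iff (γ₁ * γ₂) hz).mp h12
    have a1 := (sgn_one_iff γ₁ hw).mp h1
    have a2 := (sgn_one_iff γ₂ hz).mp h2
    have h0 := int_pin_zero hn (by linarith) (by linarith)
    simp only [asaiW, h1, h2, h12]
    norm_num [h0]
  · -- (1,1,-1) : n = 1
    have a3 := (sgn_neg_one_iff (γ₁ * γ₂) hz).mp h12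
    have a1 := (sgn_one_iff γ₁ hw).mp h1
    have a2 := (sgn_one_iff γ₂ hz).mp h2
    have h0 := int_pin_pos hn (by linarith) (by linarith)
    simp only [asaiW, h1, h2, h12]
    norm_num [← h0]
  · -- (1,-1,1) : n = 0
    have a1 := (sgn_one_iff γ₁ hw).mp h1
    have a2 := (sgn_neg_one_iff γ₂ hz).mp h2
    have a3 := (sgn_one_iff (γ₁ * γ₂) hz).mp h12
    have h0 := int_pin_zero hn (by linarith) (by linarith)
    simp only [asaiW, h1, h2, h12]
    norm_num [h0]
  · -- (1,-1,-1) : n = 0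
    have a1 := (sgn_one_iff γ₁ hw).mp h1
    have a2 := (sgn_neg_one_iff γ₂ hz).mp h2
    have a3 := (sgn_neg_one_iff (γ₁ * γ₂) hz).mp h12
    have h0 := int_pin_zero hn (by linarith) (by linarith)
    simp only [asaiW, h1, h2, h12]
    norm_num [h0]
  · -- (-1,1,1) : n = 0
    have a1 := (sgn_neg_one_iff γ₁ hw).mp h1
    have a2 := (sgn_one_iff γ₂ hz).mp h2
    have a3 := (sgn_one_iff (γ₁ * γ₂) hz).mp h12
    have h0 := int_pin_zero hn (by linarith) (by linarith)
    simp only [asaiW, h1, h2, h12]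
    norm_num [h0]
  · -- (-1,1,-1) : n = 0
    have a1 := (sgn_neg_one_iff γ₁ hw).mp h1
    have a2 := (sgn_one_iff γ₂ hz).mp h2
    have a3 := (sgn_neg_one_iff (γ₁ * γ₂) hz).mp h12
    have h0 := int_pin_zero hn (by linarith) (by linarith)
    simp only [asaiW, h1, h2, h12]
    norm_num [h0]
  · -- (-1,-1,1) : n = -1
    have a1 := (sgn_neg_one_iff γ₁ hw).mp h1
    have a2 := (sgn_neg_one_iff γ₂ hz).mp h2
    have a3 := (sgn_one_iff (γ₁ * γ₂) hz).mp h12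
    have h0 := int_pin_neg hn (by linarith) (by linarith)
    simp only [asaiW, h1, h2, h12]
    norm_num
    linarith [h0]
  · -- (-1,-1,-1) : n = 0
    have a1 := (sgn_neg_one_iff γ₁ hw).mp h1
    have a2 := (sgn_neg_one_iff γ₂ hz).mp h2
    have a3 := (sgn_neg_one_iff (γ₁ * γ₂) hz).mp h12
    have h0 := int_pin_zero hn (by linarith) (by linarith)
    simp only [asaiW, h1, h2, h12]
    norm_num [h0]

end AsaiAux

theorem asaiW_cocycle (γ₁ γ₂ γ₃ : Matrix.SpecialLinearGroup (Fin 2) ℝ) :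
    asaiW (γ₁ * γ₂) γ₃ + asaiW γ₁ γ₂ = asaiW γ₁ (γ₂ * γ₃) + asaiW γ₂ γ₃ := by
  open AsaiAux in
  have hI : (0 : ℝ) < Complex.I.im := by simp
  have h3 : 0 < (act γ₃ Complex.I).im := act_im_pos γ₃ hI
  have e1 := asaiW_eq (γ₁ * γ₂) γ₃ hI
  have e2 := asaiW_eq γ₁ γ₂ h3
  have e3 := asaiW_eq γ₁ (γ₂ * γ₃) hI
  have e4 := asaiW_eq γ₂ γ₃ hI
  rw [act_mul γ₂ γ₃ hI, show γ₁ * (γ₂ * γ₃) = γ₁ * γ₂ * γ₃ from (mul_assoc _ _ _).symm] at e3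
  have hπ : (0 : ℝ) < Real.pi := Real.pi_pos
  have key : ((asaiW (γ₁ * γ₂) γ₃ : ℝ) + (asaiW γ₁ γ₂ : ℝ)) * (2 * Real.pi)
      = ((asaiW γ₁ (γ₂ * γ₃) : ℝ) + (asaiW γ₂ γ₃ : ℝ)) * (2 * Real.pi) := by
    rw [add_mul, add_mul]
    linarith [e1, e2, e3, e4]
  have key2 : ((asaiW (γ₁ * γ₂) γ₃ : ℝ) + (asaiW γ₁ γ₂ : ℝ))
      = ((asaiW γ₁ (γ₂ * γ₃) : ℝ) + (asaiW γ₂ γ₃ : ℝ)) :=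
    mul_right_cancel₀ (by positivity) key
  exact_mod_cast key2
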